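/- arXiv:0905.3514 — 4 statements merged into one kernel-verified Lean document; each statement's English description precedes it below -/
import Mathlib

section
/- Let K and L be compact convex sets in ℝⁿ with nonempty interiors. Suppose that for every n-simplex T ⊆ K (a convex hull of n+1 affinely independent points, all lying in K), there exists v ∈ ℝⁿ with T + v ⊆ L. Then there exists v₀ ∈ ℝⁿ such that K + v₀ ⊆ L. -/
open Set

/-- The orthogonal projection of `ℝⁿ` onto a subspace `ξ`, viewed as a map `ℝⁿ → ℝⁿ`. -/
noncomputable def projSub {n : ℕ} (ξ : Submodule ℝ (EuclideanSpace ℝ (Fin n)))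
    (x : EuclideanSpace ℝ (Fin n)) : EuclideanSpace ℝ (Fin n) :=
  (ξ.orthogonalProjection x : EuclideanSpace ℝ (Fin n))

/-- The orthogonal projection of `ℝⁿ` onto the hyperplane `u^⊥`. -/
noncomputable def projHyp {n : ℕ} (u : EuclideanSpace ℝ (Fin n)) :
    EuclideanSpace ℝ (Fin n) → EuclideanSpace ℝ (Fin n) :=
  projSub ((Submodule.span ℝ {u})ᗮ)

/-- `IsSimplex n Δ` : `Δ` is an `n`-simplex in `ℝⁿ`, i.e. the convex hull of
`n+1` affinely independent points. -/
def IsSimplex (n : ℕ) (Δ : Set (EuclideanSpace ℝ (Fin n))) : Prop :=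
  ∃ p : Fin (n + 1) → EuclideanSpace ℝ (Fin n),
    AffineIndependent ℝ p ∧ Δ = convexHull ℝ (Set.range p)

/-!
The translations carrying a point `p ∈ K` into `L` form the compact convex set `L - p`, so by
Helly's theorem it suffices to translate any `n + 1` points `x₀, …, xₙ` of `K` into `L` at once.
If the `xᵢ` are affinely independent they span a simplex in `K`, and the hypothesis applies.
In general, affinely independent tuples are dense (for an affine basis `e`, the tuple `x + t • e`
is affinely independent for all but finitely many `t`, the exceptions being eigenvalues), `K` is
the closure of its interior, and the tuples that can be translated into the compact set `L` form
a closed set.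
-/

open Module Filter Topology

theorem LinearIndependent.finite_setOf_not_linearIndependent_add_smul {K V ι : Type*} [Field K]
    [AddCommGroup V] [Module K V] [FiniteDimensional K V] {d : ι → V} (hd : LinearIndependent K d)
    (u : ι → V) : {t : K | ¬LinearIndependent K fun i => u i + t • d i}.Finite := by
  obtain ⟨g, hg⟩ := (Finsupp.linearCombination K d).exists_leftInverse_of_injective
    (LinearMap.ker_eq_bot.mpr hd)
  set D : End K V := Finsupp.linearCombination K u ∘ₗ g
  -- `u + t • d` is the image of `d` under `D + t`, which is injective unless `-t` is an eigenvalue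
  have hD : ∀ i, D (d i) = u i := fun i => by
    simpa [D] using congr(Finsupp.linearCombination K u ($hg (Finsupp.single i 1)))
  refine (D.finite_hasEigenvalue.preimage neg_injective.injOn).subset fun t ht => ?_
  by_contra hne
  have hker : LinearMap.ker (D + t • 1) = ⊥ := by
    refine eq_bot_iff.mpr fun v hv => ?_
    rw [← not_not.mp hne, End.mem_eigenspace_iff, neg_smul]
    exact eq_neg_of_add_eq_zero_left hv
  exact ht (by simpa [hD, Function.comp_def] using hd.map' _ hker)

theorem AffineIndependent.finite_setOf_not_affineIndependent_add_smul {K V ι : Type*} [Field K]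
    [AddCommGroup V] [Module K V] [FiniteDimensional K V] {e : ι → V} (he : AffineIndependent K e)
    (x : ι → V) : {t : K | ¬AffineIndependent K (x + t • e)}.Finite := by
  rcases isEmpty_or_nonempty ι with _ | ⟨⟨i₀⟩⟩
  · simp [affineIndependent_of_subsingleton]
  rw [affineIndependent_iff_linearIndependent_vsub K e i₀] at he
  convert he.finite_setOf_not_linearIndependent_add_smul (fun i => x i - x i₀) using 4 with t
  rw [affineIndependent_iff_linearIndependent_vsub K _ i₀]
  congr! 2 with i
  simp only [vsub_eq_sub, Pi.add_apply, Pi.smul_apply, smul_sub]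
  abel

theorem dense_setOf_affineIndependent {𝕜 E ι : Type*} [NontriviallyNormedField 𝕜]
    [NormedAddCommGroup E] [NormedSpace 𝕜 E] [FiniteDimensional 𝕜 E] [Fintype ι]
    (hι : Fintype.card ι ≤ finrank 𝕜 E + 1) : Dense {p : ι → E | AffineIndependent 𝕜 p} := by
  obtain ⟨b⟩ := AffineBasis.exists_affineBasis_of_finiteDimensional
    (ι := Fin (finrank 𝕜 E + 1)) (k := 𝕜) (P := E) (by simp)
  obtain ⟨f⟩ := Function.Embedding.nonempty_of_card_le (hι.trans_eq (Fintype.card_fin _).symm)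
  refine fun x => mem_closure_of_tendsto (f := fun t : 𝕜 => x + t • (b ∘ f)) (b := 𝓝[≠] 0) ?_ ?_
  · exact ((by fun_prop : Continuous fun t : 𝕜 => x + t • (b ∘ f)).tendsto' 0 x
      (by simp)).mono_left nhdsWithin_le_nhds
  · exact nhdsNE_le_cofinite 0 (mem_of_superset ((b.ind.comp_embedding f)
      |>.finite_setOf_not_affineIndependent_add_smul x).compl_mem_cofinite fun _ => not_not.mp)

theorem IsCompact.isClosed_setOf_exists_forall_add_mem {G ι : Type*} [AddCommGroup G]
    [TopologicalSpace G] [IsTopologicalAddGroup G] [T2Space G] {L : Set G} (hL : IsCompact L) :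
    IsClosed {x : ι → G | ∃ v, ∀ i, x i + v ∈ L} := by
  rcases isEmpty_or_nonempty ι with _ | ⟨⟨i₀⟩⟩
  · simp only [IsEmpty.forall_iff, exists_const, ofPred_true, isClosed_univ]
  have := isCompact_iff_compactSpace.mp hL
  -- recording the translate `w = x i₀ + v ∈ L` instead of `v` makes the witness range over a
  -- compact space, along which projections are closed maps
  convert isClosedMap_fst_of_compactSpace _ (isClosed_iInter fun i => hL.isClosed.preimage
    (show Continuous fun p : (ι → G) × L => p.1 i + (p.2 - p.1 i₀) by fun_prop)) using 1
  ext x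
  constructor
  · rintro ⟨v, hv⟩
    refine ⟨(x, ⟨x i₀ + v, hv i₀⟩), mem_iInter.2 fun i => ?_, rfl⟩
    simpa only [mem_preimage, add_sub_cancel_left] using hv i
  · rintro ⟨⟨x, w⟩, hw, rfl⟩
    exact ⟨w - x i₀, fun i => mem_iInter.1 hw i⟩

theorem Convex.pi_subset_closure_setOf_affineIndependent {E ι : Type*} [NormedAddCommGroup E]
    [NormedSpace ℝ E] [FiniteDimensional ℝ E] [Fintype ι] (hι : Fintype.card ι ≤ finrank ℝ E + 1)
    {K : Set E} (hK : Convex ℝ K) (hKint : (interior K).Nonempty) :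
    univ.pi (fun _ => K) ⊆ closure {y : ι → E | AffineIndependent ℝ y ∧ ∀ i, y i ∈ K} :=
  calc univ.pi (fun _ => K)
      ⊆ univ.pi (fun _ => closure (interior K)) := by
        rw [hK.closure_interior_eq_closure_of_nonempty_interior hKint]
        exact pi_mono fun _ _ => subset_closure
    _ = closure (univ.pi fun _ => interior K) := (closure_pi_set _ _).symm
    _ ⊆ closure (univ.pi (fun _ => interior K) ∩ {y | AffineIndependent ℝ y}) :=
        closure_minimal ((dense_setOf_affineIndependent hι).open_subset_closure_inter
          (isOpen_set_pi finite_univ fun _ _ => isOpen_interior)) isClosed_closure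
    _ ⊆ closure {y : ι → E | AffineIndependent ℝ y ∧ ∀ i, y i ∈ K} :=
        closure_mono fun _ ⟨hy, hind⟩ => ⟨hind, fun i => interior_subset (hy i trivial)⟩

theorem Convex.exists_forall_add_mem_of_forall_affineIndependent {E ι : Type*}
    [NormedAddCommGroup E] [NormedSpace ℝ E] [FiniteDimensional ℝ E] [Fintype ι]
    (hι : Fintype.card ι ≤ finrank ℝ E + 1) {K L : Set E} (hK : Convex ℝ K)
    (hKint : (interior K).Nonempty) (hL : IsCompact L)
    (h : ∀ y : ι → E, AffineIndependent ℝ y → (∀ i, y i ∈ K) → ∃ v, ∀ i, y i + v ∈ L)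
    {x : ι → E} (hx : ∀ i, x i ∈ K) : ∃ v, ∀ i, x i + v ∈ L :=
  closure_minimal (fun y hy => h y hy.1 hy.2) hL.isClosed_setOf_exists_forall_add_mem
    (hK.pi_subset_closure_setOf_affineIndependent hι hKint (mem_univ_pi.2 hx))

theorem helly_theorem_compact_of_forall_family {𝕜 E ι κ : Type*} [Field 𝕜] [LinearOrder 𝕜]
    [IsStrictOrderedRing 𝕜] [AddCommGroup E] [Module 𝕜 E] [FiniteDimensional 𝕜 E]
    [TopologicalSpace E] [T2Space E] [Fintype κ] (hκ : finrank 𝕜 E + 1 ≤ Fintype.card κ)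
    {F : ι → Set E}
    (h_convex : ∀ i, Convex 𝕜 (F i)) (h_compact : ∀ i, IsCompact (F i))
    (h_inter : ∀ x : κ → ι, (⋂ j, F (x j)).Nonempty) : (⋂ i, F i).Nonempty := by
  refine Convex.helly_theorem_compact' h_convex h_compact fun I hI => ?_
  rcases I.eq_empty_or_nonempty with rfl | hI₀
  · simp
  obtain ⟨f⟩ : Nonempty (I ↪ κ) :=
    Function.Embedding.nonempty_of_card_le (by simpa using hI.trans hκ)
  have : Nonempty I := hI₀.to_subtype
  refine (h_inter (Subtype.val ∘ Function.invFun f)).mono (subset_iInter₂ fun i hi => ?_)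
  refine iInter_subset_of_subset (f ⟨i, hi⟩) ?_
  simp [Function.leftInverse_invFun f.injective _]

theorem stmt_2_general {n : ℕ} (K L : Set (EuclideanSpace ℝ (Fin n)))
    (hKcv : Convex ℝ K) (hKint : (interior K).Nonempty)
    (hLcp : IsCompact L) (hLcv : Convex ℝ L)
    (h : ∀ T : Set (EuclideanSpace ℝ (Fin n)),
      (∃ p : Fin (n + 1) → EuclideanSpace ℝ (Fin n),
        AffineIndependent ℝ p ∧ (∀ i, p i ∈ K) ∧ T = convexHull ℝ (Set.range p)) →
      ∃ v : EuclideanSpace ℝ (Fin n), (fun x => x + v) '' T ⊆ L) :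
    ∃ v₀ : EuclideanSpace ℝ (Fin n), (fun x => x + v₀) '' K ⊆ L := by
  have hcard : finrank ℝ (EuclideanSpace ℝ (Fin n)) + 1 = Fintype.card (Fin (n + 1)) := by simp
  have hvertices : ∀ y : Fin (n + 1) → EuclideanSpace ℝ (Fin n),
      AffineIndependent ℝ y → (∀ i, y i ∈ K) → ∃ v, ∀ i, y i + v ∈ L := by
    intro y hy hyK
    obtain ⟨v, hv⟩ := h _ ⟨y, hy, hyK, rfl⟩
    exact ⟨v, fun i => hv (mem_image_of_mem _ (subset_convexHull ℝ _ (mem_range_self i)))⟩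
  obtain ⟨v, hv⟩ := helly_theorem_compact_of_forall_family hcard.le
    (F := fun p : K => (fun v => (p : EuclideanSpace ℝ (Fin n)) + v) ⁻¹' L)
    (fun p => hLcv.translate_preimage_right p)
    (fun p => (Homeomorph.addLeft (p : EuclideanSpace ℝ (Fin n))).isCompact_preimage.2 hLcp)
    fun x => by
      obtain ⟨v, hv⟩ := hKcv.exists_forall_add_mem_of_forall_affineIndependent hcard.ge hKint hLcp
        hvertices fun j => (x j).2
      exact ⟨v, mem_iInter.2 hv⟩
  exact ⟨v, by rintro _ ⟨p, hp, rfl⟩; exact mem_iInter.1 hv ⟨p, hp⟩⟩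

/-- Inscribed simplex containment for bodies with non-empty interiors. -/
theorem stmt_2 {n : ℕ} (hn : 1 ≤ n) (K L : Set (EuclideanSpace ℝ (Fin n)))
    (hKcp : IsCompact K) (hKcv : Convex ℝ K) (hKint : (interior K).Nonempty)
    (hLcp : IsCompact L) (hLcv : Convex ℝ L) (hLint : (interior L).Nonempty)
    (h : ∀ T : Set (EuclideanSpace ℝ (Fin n)),
      (∃ p : Fin (n + 1) → EuclideanSpace ℝ (Fin n),
        AffineIndependent ℝ p ∧ (∀ i, p i ∈ K) ∧ T = convexHull ℝ (Set.range p)) →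
      ∃ v : EuclideanSpace ℝ (Fin n), (fun x => x + v) '' T ⊆ L) :
    ∃ v₀ : EuclideanSpace ℝ (Fin n), (fun x => x + v₀) '' K ⊆ L :=
  stmt_2_general K L hKcv hKint hLcp hLcv h
end

section
/- Let L be a nonempty compact convex set in ℝⁿ, and let Q be a polytope in ℝⁿ having at most n vertices (the convex hull of at most n points). Suppose that for every unit vector u ∈ ℝⁿ there exists v ∈ u^⊥ such that Q_u + v ⊆ L_u, where Q_u and L_u denote the orthogonal projections of Q and L onto the hyperplane u^⊥. Then there exists v₀ ∈ ℝⁿ such that Q + v₀ ⊆ L. -/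
open Set

/-! If no translate of `Q` lies in `L`, the sets `L - p`, `p` a vertex of `Q`, have empty
intersection, so the diagonal of `(ℝⁿ)ˢ` misses the compact convex product `∏ₚ (L - p)`. A
separating hyperplane gives functionals `φₚ` with `∑ φₚ = 0` and `∑ φₚ (xₚ) > 0` on the product.
At most `n` functionals summing to zero share a nonzero kernel vector `u`; they then factor
through the projection onto `u^⊥`, and the shadow hypothesis for `u` yields a point of the
product at which `∑ φₚ (xₚ) = ∑ φₚ v = 0`. -/

theorem Submodule.apply_eq_zero_of_forall_apply_lt {M : Type*} [AddCommGroup M] [Module ℝ M]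
    (p : Submodule ℝ M) (f : M →ₗ[ℝ] ℝ) {α : ℝ} (h : ∀ x ∈ p, f x < α) {x : M} (hx : x ∈ p) :
    f x = 0 := by
  by_contra hfx
  have := h ((α / f x) • x) (p.smul_mem _ hx)
  rw [map_smul, smul_eq_mul, div_mul_cancel₀ _ hfx] at this
  exact lt_irrefl _ this

theorem exists_sum_eq_zero_and_sum_apply_pos_of_iInter_eq_empty {E ι : Type*}
    [NormedAddCommGroup E] [NormedSpace ℝ E] [FiniteDimensional ℝ E] [Fintype ι]
    {C : ι → Set E} (hcp : ∀ i, IsCompact (C i)) (hcv : ∀ i, Convex ℝ (C i))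
    (h : ⋂ i, C i = ∅) :
    ∃ φ : ι → StrongDual ℝ E, (∀ y, ∑ i, φ i y = 0) ∧
      ∀ x : ι → E, (∀ i, x i ∈ C i) → 0 < ∑ i, φ i (x i) := by
  classical
  let D : Submodule ℝ (ι → E) := LinearMap.range (LinearMap.pi fun _ => LinearMap.id)
  have hdisj : Disjoint (D : Set (ι → E)) (univ.pi C) := by
    rw [Set.disjoint_left]
    rintro _ ⟨y, rfl⟩ hy
    have : y ∈ ⋂ i, C i := mem_iInter.2 fun i => hy i (mem_univ i)
    rwa [h] at this
  obtain ⟨f, α, β, hα, hαβ, hβ⟩ := geometric_hahn_banach_closed_compact D.convex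
    D.closed_of_finiteDimensional (convex_pi fun i _ => hcv i) (isCompact_univ_pi hcp) hdisj
  let φ i := f.comp (ContinuousLinearMap.single ℝ (fun _ => E) i)
  have hφ_sum : ∀ x : ι → E, ∑ i, φ i (x i) = f x := fun x => by
    simp only [φ, ContinuousLinearMap.comp_apply, ← map_sum]
    congr
    exact Finset.univ_sum_single x
  refine ⟨φ, ?_, fun x hx => ?_⟩
  · intro y
    have hy : (fun _ => y) ∈ D := ⟨y, rfl⟩
    simpa [hφ_sum fun _ => y] using D.apply_eq_zero_of_forall_apply_lt f.toLinearMap hα hy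
  · have hf0 : f 0 < α := hα 0 D.zero_mem
    have hfx : β < f x := hβ x fun i _ => hx i
    linarith [map_zero f, hφ_sum x]

theorem LinearMap.exists_ne_zero_forall_eq_zero_of_sum_eq_zero {K V ι : Type*} [Field K]
    [AddCommGroup V] [Module K V] [FiniteDimensional K V] [Fintype ι] [Nonempty ι]
    (φ : ι → V →ₗ[K] K) (hsum : ∀ v, ∑ i, φ i v = 0)
    (hcard : Fintype.card ι ≤ Module.finrank K V) :
    ∃ u ≠ 0, ∀ i, φ i u = 0 := by
  classical
  obtain ⟨i₀⟩ := ‹Nonempty ι›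
  -- `φ i₀ = -∑_{i ≠ i₀} φ i`, so it suffices to kill the fewer than `dim V` others
  let Ψ : V →ₗ[K] ({i // i ≠ i₀} → K) := LinearMap.pi fun i => φ i
  have hΨ : LinearMap.ker Ψ ≠ ⊥ := Ψ.ker_ne_bot_of_finrank_lt <| by
    rw [Module.finrank_fintype_fun_eq_card, Fintype.card_subtype_compl, Fintype.card_subtype_eq]
    have := Fintype.card_pos (α := ι)
    omega
  obtain ⟨u, hu, hu0⟩ := (Submodule.ne_bot_iff _).1 hΨ
  have hker : ∀ i ≠ i₀, φ i u = 0 := fun i hi => congr_fun (LinearMap.mem_ker.1 hu) ⟨i, hi⟩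
  refine ⟨u, hu0, fun i => ?_⟩
  obtain rfl | hi := eq_or_ne i i₀
  · have := hsum u
    rwa [← Finset.add_sum_erase _ _ (Finset.mem_univ i),
      Finset.sum_eq_zero fun j hj => hker j (Finset.ne_of_mem_erase hj), add_zero] at this
  · exact hker i hi

theorem map_projHyp_of_map_eq_zero {n : ℕ} {F M : Type*} [AddCommGroup M] [Module ℝ M]
    [FunLike F (EuclideanSpace ℝ (Fin n)) M] [LinearMapClass F ℝ (EuclideanSpace ℝ (Fin n)) M]
    {u : EuclideanSpace ℝ (Fin n)} {φ : F} (hu : φ u = 0)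
    (x : EuclideanSpace ℝ (Fin n)) : φ (projHyp u x) = φ x := by
  obtain ⟨c, hc⟩ := Submodule.mem_span_singleton.1 ((ℝ ∙ u).starProjection_apply_mem x)
  have hproj : projHyp u x = x - (ℝ ∙ u).starProjection x := by
    change (ℝ ∙ u)ᗮ.starProjection x = _
    rw [Submodule.starProjection_orthogonal]
    rfl
  rw [hproj, map_sub, ← hc, map_smul, hu, smul_zero, sub_zero]

theorem exists_forall_add_mem_of_forall_projHyp {n : ℕ} {L : Set (EuclideanSpace ℝ (Fin n))}
    (hLcp : IsCompact L) (hLcv : Convex ℝ L) {s : Finset (EuclideanSpace ℝ (Fin n))}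
    (hs : s.card ≤ n)
    (h : ∀ u : EuclideanSpace ℝ (Fin n), ‖u‖ = 1 →
      ∃ v, ∀ p ∈ s, projHyp u p + v ∈ projHyp u '' L) :
    ∃ v₀, ∀ p ∈ s, p + v₀ ∈ L := by
  by_contra! hcon
  let C : s → Set (EuclideanSpace ℝ (Fin n)) := fun p =>
    ((p : EuclideanSpace ℝ (Fin n)) + ·) ⁻¹' L
  have hC : ⋂ p, C p = ∅ := eq_empty_of_forall_notMem fun v hv => by
    obtain ⟨p, hp, hpv⟩ := hcon v
    exact hpv (mem_iInter.1 hv ⟨p, hp⟩)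
  have : Nonempty s := let ⟨p, hp, _⟩ := hcon 0; ⟨⟨p, hp⟩⟩
  obtain ⟨φ, hφ_sum, hφ_pos⟩ :=
    exists_sum_eq_zero_and_sum_apply_pos_of_iInter_eq_empty (C := C)
    (fun p => (Homeomorph.addLeft (p : EuclideanSpace ℝ (Fin n))).isCompact_preimage.2 hLcp)
    (fun p => hLcv.translate_preimage_right p) hC
  obtain ⟨u, hu0, hφu⟩ := LinearMap.exists_ne_zero_forall_eq_zero_of_sum_eq_zero
    (fun p => (φ p : EuclideanSpace ℝ (Fin n) →ₗ[ℝ] ℝ)) hφ_sum (by simpa using hs)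
  let w : EuclideanSpace ℝ (Fin n) := (‖u‖⁻¹ : ℝ) • u
  have hφw : ∀ p, φ p w = 0 := fun p => by
    rw [map_smul, ← ContinuousLinearMap.coe_coe, hφu, smul_zero]
  obtain ⟨v, hv⟩ := h w (norm_smul_inv_norm hu0)
  choose l hlL hl using hv
  have hφv : ∀ p, φ p (l p p.2 - p) = φ p v := fun p => by
    rw [map_sub, ← map_projHyp_of_map_eq_zero (hφw p) (l p p.2),
      ← map_projHyp_of_map_eq_zero (hφw p) p, hl, map_add, add_sub_cancel_left]
  have := hφ_pos (fun p => l p p.2 - p) fun p => by simpa [C] using hlL p p.2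
  rw [Finset.sum_congr rfl fun p _ => hφv p, hφ_sum] at this
  exact lt_irrefl 0 this

theorem stmt_5_general {n : ℕ} (L Q : Set (EuclideanSpace ℝ (Fin n)))
    (hLcp : IsCompact L) (hLcv : Convex ℝ L)
    (hQ : ∃ s : Finset (EuclideanSpace ℝ (Fin n)), s.card ≤ n ∧
      Q = convexHull ℝ (↑s : Set (EuclideanSpace ℝ (Fin n))))
    (h : ∀ u : EuclideanSpace ℝ (Fin n), ‖u‖ = 1 →
      ∃ v ∈ (Submodule.span ℝ {u})ᗮ,
        (fun x => x + v) '' (projHyp u '' Q) ⊆ projHyp u '' L) :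
    ∃ v₀ : EuclideanSpace ℝ (Fin n), (fun x => x + v₀) '' Q ⊆ L := by
  obtain ⟨s, hs, rfl⟩ := hQ
  obtain ⟨v₀, hv₀⟩ := exists_forall_add_mem_of_forall_projHyp hLcp hLcv hs fun u hu => by
    obtain ⟨v, -, hv⟩ := h u hu
    exact ⟨v, fun p hp => hv ⟨_, mem_image_of_mem _ (subset_convexHull ℝ _ hp), rfl⟩⟩
  exact ⟨v₀, image_subset_iff.2 <| convexHull_min hv₀ (hLcv.translate_preimage_left v₀)⟩

/-- Shadow covering by a convex body of a polytope with at most n vertices. -/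
theorem stmt_5 {n : ℕ} (hn : 1 ≤ n) (L Q : Set (EuclideanSpace ℝ (Fin n)))
    (hLne : L.Nonempty) (hLcp : IsCompact L) (hLcv : Convex ℝ L)
    (hQ : ∃ s : Finset (EuclideanSpace ℝ (Fin n)), s.card ≤ n ∧
      Q = convexHull ℝ (↑s : Set (EuclideanSpace ℝ (Fin n))))
    (h : ∀ u : EuclideanSpace ℝ (Fin n), ‖u‖ = 1 →
      ∃ v ∈ (Submodule.span ℝ {u})ᗮ,
        (fun x => x + v) '' (projHyp u '' Q) ⊆ projHyp u '' L) :
    ∃ v₀ : EuclideanSpace ℝ (Fin n), (fun x => x + v₀) '' Q ⊆ L :=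
  stmt_5_general L Q hLcp hLcv hQ h
end

section
/- Let K and L be nonempty compact convex sets in ℝⁿ and let 2 ≤ d ≤ n-1. Suppose that for every d-dimensional linear subspace ξ of ℝⁿ there exists v ∈ ξ such that K_ξ + v ⊆ L_ξ, where K_ξ and L_ξ denote the orthogonal projections of K and L onto ξ. If K and L have the same diameter, then there exists v₀ ∈ ℝⁿ such that K + v₀ ⊆ L. -/
/-!
Let `a, b ∈ K` realise the diameter of `K`, put `e = a - b`, and let `c ∈ L` maximise `⟪e, ·⟫`
on `L`; then `K + (c - a) ⊆ L`. Otherwise separate some `x + (c - a)`, `x ∈ K`, from `L` by a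
direction `w`, and take a `d`-dimensional subspace `ξ ∋ e, w`. Lifting the translated shadows of
`a` and `b` to `y_a, y_b ∈ L` gives `⟪e, y_a - y_b⟫ = ‖e‖²`, while `‖y_a - y_b‖ ≤ diam L = ‖e‖`;
the equality case of Cauchy–Schwarz forces `y_a - y_b = e`, and likewise `c - y_b = e`, so
`y_a = c`. Hence the translation on `ξ` is the shadow of `c - a`, so the shadow of `x + (c - a)`
lies in that of `L`, which the separating direction `w ∈ ξ` forbids.
-/

open Set

open Bornology Metric RealInnerProductSpace

variable {E : Type*} [NormedAddCommGroup E] [InnerProductSpace ℝ E]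

theorem eq_of_norm_le_of_norm_sq_le_inner {e z : E} (hz : ‖z‖ ≤ ‖e‖) (he : ‖e‖ ^ 2 ≤ ⟪e, z⟫) :
    z = e := by
  have h : ‖z - e‖ ^ 2 = ‖z‖ ^ 2 - 2 * ⟪e, z⟫ + ‖e‖ ^ 2 := by
    rw [norm_sub_sq_real, real_inner_comm]
  rw [← sub_eq_zero, ← norm_eq_zero]
  nlinarith [norm_nonneg z, norm_nonneg e, sq_nonneg ‖z - e‖]

theorem Submodule.inner_starProjection_of_mem (ξ : Submodule ℝ E) [ξ.HasOrthogonalProjection]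
    {g : E} (hg : g ∈ ξ) (z : E) : ⟪g, ξ.starProjection z⟫ = ⟪g, z⟫ := by
  rw [← ξ.inner_starProjection_left_eq_right, ξ.starProjection_eq_self_iff.mpr hg]

theorem exists_forall_starProjection_notMem [CompleteSpace E] {L : Set E} (hLc : IsClosed L)
    (hLcv : Convex ℝ L) {z : E} (hz : z ∉ L) :
    ∃ w : E, ∀ (ξ : Submodule ℝ E) [ξ.HasOrthogonalProjection], w ∈ ξ →
      ξ.starProjection z ∉ ξ.starProjection '' L := by
  obtain ⟨f, s, hfL, hfz⟩ := geometric_hahn_banach_closed_point hLcv hLc hz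
  refine ⟨(InnerProductSpace.toDual ℝ E).symm f, fun ξ _ hw ⟨y, hyL, hyz⟩ => ?_⟩
  have h := congrArg (⟪(InnerProductSpace.toDual ℝ E).symm f, ·⟫) hyz
  simp only [ξ.inner_starProjection_of_mem hw, InnerProductSpace.toDual_symm_apply] at h
  linarith [hfL y hyL]

theorem eq_of_starProjection_eq_add_of_isMaxOn (ξ : Submodule ℝ E) [ξ.HasOrthogonalProjection]
    {L : Set E} (hL : IsBounded L) {a b c v ya yb : E} (hab : a - b ∈ ξ)
    (hdiam : diam L ≤ ‖a - b‖) (hcL : c ∈ L) (hc : IsMaxOn (⟪a - b, ·⟫) L c)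
    (hya : ya ∈ L) (hyb : yb ∈ L) (hPa : ξ.starProjection ya = ξ.starProjection a + v)
    (hPb : ξ.starProjection yb = ξ.starProjection b + v) : ya = c := by
  have hshadow : ⟪a - b, ya - yb⟫ = ‖a - b‖ ^ 2 := by
    rw [← ξ.inner_starProjection_of_mem hab, map_sub, hPa, hPb, add_sub_add_right_eq_sub,
      ← map_sub, ξ.inner_starProjection_of_mem hab, real_inner_self_eq_norm_sq]
  have hdist {y y' : E} (hy : y ∈ L) (hy' : y' ∈ L) : ‖y - y'‖ ≤ ‖a - b‖ :=
    (dist_eq_norm y y' ▸ dist_le_diam_of_mem hL hy hy').trans hdiam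
  have hya_yb : ya - yb = a - b :=
    eq_of_norm_le_of_norm_sq_le_inner (hdist hya hyb) hshadow.ge
  have hc_yb : c - yb = a - b := by
    refine eq_of_norm_le_of_norm_sq_le_inner (hdist hcL hyb) ?_
    have hmax : ⟪a - b, ya⟫ ≤ ⟪a - b, c⟫ := hc hya
    rw [inner_sub_right] at hshadow ⊢
    linarith
  exact sub_left_injective (hya_yb.trans hc_yb.symm)

theorem Submodule.exists_le_finrank_eq {K V : Type*} [DivisionRing K] [AddCommGroup V]
    [Module K V] [FiniteDimensional K V] (W : Submodule K V) {d : ℕ}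
    (hWd : Module.finrank K W ≤ d) (hdV : d ≤ Module.finrank K V) :
    ∃ ξ : Submodule K V, W ≤ ξ ∧ Module.finrank K ξ = d := by
  induction d with
  | zero => exact ⟨W, le_rfl, by omega⟩
  | succ d ih =>
    rcases hWd.eq_or_lt with hW | hW
    · exact ⟨W, le_rfl, hW⟩
    obtain ⟨ξ, hWξ, hξ⟩ := ih (by omega) (by omega)
    obtain ⟨v, -, hv⟩ := SetLike.exists_of_lt (lt_top_of_finrank_lt_finrank (s := ξ) (by omega))
    exact ⟨ξ ⊔ span K {v}, hWξ.trans le_sup_left, by rw [finrank_sup_span_singleton hv, hξ]⟩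

theorem IsCompact.exists_dist_eq_diam {α : Type*} [PseudoMetricSpace α] {s : Set α}
    (hs : IsCompact s) (hne : s.Nonempty) : ∃ a ∈ s, ∃ b ∈ s, dist a b = diam s := by
  obtain ⟨⟨a, b⟩, ⟨ha, hb⟩, hmax⟩ :=
    (hs.prod hs).exists_isMaxOn (hne.prod hne) continuous_dist.continuousOn
  refine ⟨a, ha, b, hb, le_antisymm (dist_le_diam_of_mem hs.isBounded ha hb) ?_⟩
  exact diam_le_of_forall_dist_le dist_nonneg fun x hx y hy => hmax (mk_mem_prod hx hy)

theorem stmt_7_general {n : ℕ} (d : ℕ) (hd2 : 2 ≤ d) (hdn : d ≤ n - 1)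
    (K L : Set (EuclideanSpace ℝ (Fin n)))
    (hKne : K.Nonempty) (hKcp : IsCompact K)
    (hLne : L.Nonempty) (hLcp : IsCompact L) (hLcv : Convex ℝ L)
    (h : ∀ ξ : Submodule ℝ (EuclideanSpace ℝ (Fin n)), Module.finrank ℝ ξ = d →
      ∃ v ∈ ξ, (fun x => x + v) '' (projSub ξ '' K) ⊆ projSub ξ '' L)
    (hdiam : Metric.diam K = Metric.diam L) :
    ∃ v₀ : EuclideanSpace ℝ (Fin n), (fun x => x + v₀) '' K ⊆ L := by
  obtain ⟨a, haK, b, hbK, hab⟩ := hKcp.exists_dist_eq_diam hKne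
  obtain ⟨c, hcL, hc⟩ := hLcp.exists_isMaxOn hLne
    (continuous_const.inner continuous_id).continuousOn (f := (⟪a - b, ·⟫))
  refine ⟨c - a, ?_⟩
  rintro _ ⟨x, hxK, rfl⟩
  by_contra hz
  obtain ⟨w, hw⟩ := exists_forall_starProjection_notMem hLcp.isClosed hLcv hz
  obtain ⟨ξ, hspan, hξd⟩ := (Submodule.span ℝ {a - b, w}).exists_le_finrank_eq (d := d)
    ((finrank_span_le_card _).trans (by simpa using (Finset.card_insert_le _ _).trans hd2))
    (by rw [finrank_euclideanSpace_fin]; omega)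
  obtain ⟨v, -, hv⟩ := h ξ hξd
  have hlift {q} (hq : q ∈ K) : ∃ y ∈ L, ξ.starProjection y = ξ.starProjection q + v := by
    obtain ⟨y, hyL, hy⟩ := hv ⟨_, ⟨q, hq, rfl⟩, rfl⟩
    exact ⟨y, hyL, hy⟩
  obtain ⟨ya, hya, hPa⟩ := hlift haK
  obtain ⟨yb, hyb, hPb⟩ := hlift hbK
  obtain ⟨yx, hyx, hPx⟩ := hlift hxK
  have hmem {y} (hy : y ∈ ({a - b, w} : Set _)) : y ∈ ξ := hspan (Submodule.subset_span hy)
  have hyac : ya = c := eq_of_starProjection_eq_add_of_isMaxOn ξ hLcp.isBounded (hmem (by simp))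
    (by rw [← dist_eq_norm, hab, hdiam]) hcL hc hya hyb hPa hPb
  refine hw ξ (hmem (by simp)) ⟨yx, hyx, ?_⟩
  rw [hPx, map_add, map_sub, ← hyac, hPa]
  abel

/-- Equal diameters plus d-shadow covering implies containment. -/
theorem stmt_7 {n : ℕ} (hn : 2 ≤ n) (d : ℕ) (hd2 : 2 ≤ d) (hdn : d ≤ n - 1)
    (K L : Set (EuclideanSpace ℝ (Fin n)))
    (hKne : K.Nonempty) (hKcp : IsCompact K) (hKcv : Convex ℝ K)
    (hLne : L.Nonempty) (hLcp : IsCompact L) (hLcv : Convex ℝ L)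
    (h : ∀ ξ : Submodule ℝ (EuclideanSpace ℝ (Fin n)), Module.finrank ℝ ξ = d →
      ∃ v ∈ ξ, (fun x => x + v) '' (projSub ξ '' K) ⊆ projSub ξ '' L)
    (hdiam : Metric.diam K = Metric.diam L) :
    ∃ v₀ : EuclideanSpace ℝ (Fin n), (fun x => x + v₀) '' K ⊆ L :=
  stmt_7_general d hd2 hdn K L hKne hKcp hLne hLcp hLcv h hdiam
end

section
/- Let K and L be nonempty compact convex sets in ℝⁿ and let ψ : ℝⁿ → ℝⁿ be a nonsingular (invertible) linear transformation. Then the following are equivalent: (i) for every unit vector u ∈ ℝⁿ there exists v ∈ u^⊥ with K_u + v ⊆ L_u; (ii) for every unit vector u ∈ ℝⁿ there exists w ∈ u^⊥ with (ψK)_u + w ⊆ (ψL)_u. Here S_u denotes the orthogonal projection of S onto the hyperplane u^⊥, and ψS = {ψ(x) : x ∈ S}. -/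
/-!
Two points have the same orthogonal projection onto `u^⊥` exactly when they differ by a multiple
of `u`, so a translate of the shadow `K_u` lies in `L_u` iff a translate of `K` lies in the
cylinder `L + ℝu`. That condition only involves the linear structure: a linear bijection `ψ`
carries translates to translates and `L + ℝu` onto `ψL + ℝψu`, and `u ↦ ψu` permutes the lines
through the origin. Since the condition depends only on the line `ℝu`, quantifying over unit
vectors is the same as quantifying over nonzero ones.
-/

open Set

/-- The set of exposed points of `K`: points that are the unique maximizer in `K`
of the inner product with some unit vector. -/
def exposedPts {n : ℕ} (K : Set (EuclideanSpace ℝ (Fin n))) :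
    Set (EuclideanSpace ℝ (Fin n)) :=
  {x | x ∈ K ∧ ∃ u : EuclideanSpace ℝ (Fin n), ‖u‖ = 1 ∧
    {y ∈ K | ∀ z ∈ K, (inner ℝ z u : ℝ) ≤ (inner ℝ y u : ℝ)} = {x}}

open scoped Pointwise

section Cylinder

variable {R E F : Type*} [Ring R] [AddCommGroup E] [Module R E] [AddCommGroup F] [Module R F]

def TranslateInCylinder (K L : Set E) (ℓ : Submodule R E) : Prop :=
  ∃ v : E, (· + v) '' K ⊆ L + ℓ

theorem TranslateInCylinder.image {K L : Set E} {ℓ : Submodule R E}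
    (h : TranslateInCylinder K L ℓ) (f : E →ₗ[R] F) :
    TranslateInCylinder (f '' K) (f '' L) (ℓ.map f) := by
  obtain ⟨v, hv⟩ := h
  refine ⟨f v, ?_⟩
  rw [image_image, Submodule.map_coe, ← Set.image_add]
  simpa only [image_image, map_add] using image_mono (f := f) hv

theorem translateInCylinder_image_iff (e : E ≃ₗ[R] F) {K L : Set E} {ℓ : Submodule R E} :
    TranslateInCylinder (e '' K) (e '' L) (ℓ.map (e : E →ₗ[R] F)) ↔
      TranslateInCylinder K L ℓ := by
  refine ⟨fun h => ?_, fun h => h.image (e : E →ₗ[R] F)⟩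
  simpa [image_image, ← Submodule.map_comp] using h.image (e.symm : F →ₗ[R] E)

theorem forall_translateInCylinder_span_image_iff (e : E ≃ₗ[R] F) (K L : Set E) :
    (∀ u : F, u ≠ 0 → TranslateInCylinder (e '' K) (e '' L) (R ∙ u)) ↔
      ∀ u : E, u ≠ 0 → TranslateInCylinder K L (R ∙ u) := by
  constructor
  · intro h u hu
    rw [← translateInCylinder_image_iff e, Submodule.map_span, image_singleton]
    exact h (e u) (e.map_ne_zero_iff.mpr hu)
  · intro h u hu
    have := (translateInCylinder_image_iff e).mpr (h (e.symm u) (e.symm.map_ne_zero_iff.mpr hu))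
    rwa [Submodule.map_span, image_singleton, LinearEquiv.coe_coe, e.apply_symm_apply] at this

end Cylinder

theorem forall_norm_eq_one_iff_forall_ne_zero {E : Type*} [NormedAddCommGroup E]
    [NormedSpace ℝ E] (P : Submodule ℝ E → Prop) :
    (∀ u : E, ‖u‖ = 1 → P (ℝ ∙ u)) ↔ ∀ u : E, u ≠ 0 → P (ℝ ∙ u) := by
  refine ⟨fun h u hu => ?_, fun h u hu => h u (norm_ne_zero_iff.mp (by simp [hu]))⟩
  rw [← Submodule.span_singleton_smul_eq (inv_ne_zero (norm_ne_zero_iff.mpr hu)).isUnit]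
  exact h _ (norm_smul_inv_norm hu)

section Projection

variable {n : ℕ}

theorem projSub_eq_starProjection (ξ : Submodule ℝ (EuclideanSpace ℝ (Fin n))) :
    projSub ξ = ξ.starProjection := rfl

theorem exists_translate_projSub_subset_iff (ξ : Submodule ℝ (EuclideanSpace ℝ (Fin n)))
    (K L : Set (EuclideanSpace ℝ (Fin n))) :
    (∃ v ∈ ξ, (· + v) '' (projSub ξ '' K) ⊆ projSub ξ '' L) ↔ TranslateInCylinder K L ξᗮ := by
  rw [projSub_eq_starProjection]
  constructor
  · rintro ⟨v, hv, hsub⟩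
    refine ⟨v, ?_⟩
    rintro _ ⟨k, hk, rfl⟩
    obtain ⟨l, hl, hlk⟩ := hsub ⟨_, mem_image_of_mem _ hk, rfl⟩
    have hmem : k + v - l ∈ ξᗮ := by
      rw [← Submodule.starProjection_apply_eq_zero_iff, map_sub, map_add, hlk,
        Submodule.starProjection_eq_self_iff.mpr hv, sub_self]
    exact ⟨l, hl, k + v - l, hmem, add_sub_cancel _ _⟩
  · rintro ⟨v, hv⟩
    refine ⟨ξ.starProjection v, ξ.starProjection_apply_mem v, ?_⟩
    rintro _ ⟨_, ⟨k, hk, rfl⟩, rfl⟩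
    obtain ⟨l, hl, m, hm, hlm : l + m = k + v⟩ := hv ⟨k, hk, rfl⟩
    refine ⟨l, hl, show _ = _ + _ from ?_⟩
    rw [← map_add, ← hlm, map_add, (ξ.starProjection_apply_eq_zero_iff).mpr hm, add_zero]

theorem exists_translate_projHyp_subset_iff (u : EuclideanSpace ℝ (Fin n))
    (K L : Set (EuclideanSpace ℝ (Fin n))) :
    (∃ v ∈ (ℝ ∙ u)ᗮ, (· + v) '' (projHyp u '' K) ⊆ projHyp u '' L) ↔
      TranslateInCylinder K L (ℝ ∙ u) := by
  rw [projHyp, exists_translate_projSub_subset_iff, Submodule.orthogonal_orthogonal]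

end Projection

theorem stmt_18_general {n : ℕ} (K L : Set (EuclideanSpace ℝ (Fin n)))
    (ψ : EuclideanSpace ℝ (Fin n) →ₗ[ℝ] EuclideanSpace ℝ (Fin n))
    (hψ : Function.Bijective ψ) :
    (∀ u : EuclideanSpace ℝ (Fin n), ‖u‖ = 1 →
      ∃ v ∈ (Submodule.span ℝ {u})ᗮ,
        (fun x => x + v) '' (projHyp u '' K) ⊆ projHyp u '' L) ↔
    (∀ u : EuclideanSpace ℝ (Fin n), ‖u‖ = 1 →
      ∃ w ∈ (Submodule.span ℝ {u})ᗮ,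
        (fun x => x + w) '' (projHyp u '' (ψ '' K)) ⊆ projHyp u '' (ψ '' L)) := by
  simp only [exists_translate_projHyp_subset_iff]
  rw [forall_norm_eq_one_iff_forall_ne_zero (TranslateInCylinder K L),
    forall_norm_eq_one_iff_forall_ne_zero (TranslateInCylinder (ψ '' K) (ψ '' L))]
  exact (forall_translateInCylinder_span_image_iff (LinearEquiv.ofBijective ψ hψ) K L).symm

/-- Shadow covering in every direction is invariant under nonsingular linear maps. -/
theorem stmt_18 {n : ℕ} (hn : 1 ≤ n) (K L : Set (EuclideanSpace ℝ (Fin n)))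
    (hKne : K.Nonempty) (hKcp : IsCompact K) (hKcv : Convex ℝ K)
    (hLne : L.Nonempty) (hLcp : IsCompact L) (hLcv : Convex ℝ L)
    (ψ : EuclideanSpace ℝ (Fin n) →ₗ[ℝ] EuclideanSpace ℝ (Fin n))
    (hψ : Function.Bijective ψ) :
    (∀ u : EuclideanSpace ℝ (Fin n), ‖u‖ = 1 →
      ∃ v ∈ (Submodule.span ℝ {u})ᗮ,
        (fun x => x + v) '' (projHyp u '' K) ⊆ projHyp u '' L) ↔
    (∀ u : EuclideanSpace ℝ (Fin n), ‖u‖ = 1 →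
      ∃ w ∈ (Submodule.span ℝ {u})ᗮ,
        (fun x => x + w) '' (projHyp u '' (ψ '' K)) ⊆ projHyp u '' (ψ '' L)) :=
  stmt_18_general K L ψ hψ
end
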